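/- Let M be an n×n symmetric negative definite matrix with nonnegative off-diagonal entries, and suppose the graph on {1,…,n} with an edge between i ≠ j whenever M_{ij} > 0 is connected. Then every nonzero x ∈ ℤ^n with M·x ≤ 0 componentwise satisfies x_i > 0 for every i. -/

import Mathlib

/-!
Write `x = x⁺ - x⁻`. Because the off-diagonal entries of `M` are nonnegative and `x⁺`, `x⁻` have
disjoint supports, `x⁻ ⬝ M x⁺ ≥ 0`, while `x⁻ ⬝ M x ≤ 0` since `M x ≤ 0`; hence `x⁻ ⬝ M x⁻ ≥ 0`,
and negative definiteness forces `x⁻ = 0`. So `x ≥ 0`. If `x a = 0`, then row `a` of `M x ≤ 0` is a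
sum of nonnegative terms, so `x b = 0` for every neighbour `b` of `a`; by connectedness `x = 0`.
-/

open Matrix

lemma SimpleGraph.Reachable.imp_of_adj {V : Type*} {G : SimpleGraph V} {p : V → Prop}
    (hp : ∀ u v, G.Adj u v → p u → p v) {u v : V} (h : G.Reachable u v) : p u → p v := by
  obtain ⟨w⟩ := h
  induction w with
  | nil => exact id
  | cons hadj _ ih => exact ih ∘ hp _ _ hadj

lemma negPart_mul_posPart {R : Type*} [Ring R] [LinearOrder R] [AddLeftMono R] (a : R) :
    a⁻ * a⁺ = 0 := by
  rcases le_total a 0 with ha | ha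
  · rw [posPart_eq_zero.mpr ha, mul_zero]
  · rw [negPart_eq_zero.mpr ha, zero_mul]

namespace Matrix

section OrderedRing

variable {ι R : Type*} [Fintype ι] [CommRing R] [LinearOrder R] [IsStrictOrderedRing R]
  {M : Matrix ι ι R}

lemma dotProduct_mulVec_nonneg_of_mul_eq_zero (hoff : ∀ i j, i ≠ j → 0 ≤ M i j)
    {u v : ι → R} (hu : 0 ≤ u) (hv : 0 ≤ v) (huv : ∀ i, u i * v i = 0) :
    0 ≤ u ⬝ᵥ M *ᵥ v := by
  refine Finset.sum_nonneg fun i _ => ?_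
  rw [mulVec, dotProduct, Finset.mul_sum]
  refine Finset.sum_nonneg fun j _ => ?_
  rcases eq_or_ne i j with rfl | hij
  · rw [mul_left_comm, huv, mul_zero]
  · exact mul_nonneg (hu i) (mul_nonneg (hoff i j hij) (hv j))

lemma nonneg_of_mulVec_nonpos (hoff : ∀ i j, i ≠ j → 0 ≤ M i j)
    (hdef : ∀ y : ι → R, y ≠ 0 → y ⬝ᵥ M *ᵥ y < 0) {x : ι → R} (hx : M *ᵥ x ≤ 0) : 0 ≤ x := by
  rw [← negPart_eq_zero]
  by_contra hne
  refine (hdef _ hne).not_ge ?_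
  have hcross : 0 ≤ x⁻ ⬝ᵥ M *ᵥ x⁺ :=
    dotProduct_mulVec_nonneg_of_mul_eq_zero hoff (negPart_nonneg x) (posPart_nonneg x)
      fun i => negPart_mul_posPart (x i)
  have hpair : x⁻ ⬝ᵥ M *ᵥ x ≤ 0 := by
    simpa using dotProduct_nonneg_of_nonneg (negPart_nonneg x) (neg_nonneg.mpr hx)
  calc (0 : R) ≤ x⁻ ⬝ᵥ M *ᵥ x⁺ - x⁻ ⬝ᵥ M *ᵥ x := by linarith
    _ = x⁻ ⬝ᵥ M *ᵥ x⁻ := by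
      rw [← dotProduct_sub, ← mulVec_sub,
        sub_eq_of_eq_add' (sub_eq_iff_eq_add.mp (posPart_sub_negPart x))]

lemma eq_zero_of_mulVec_nonpos_of_pos (hoff : ∀ i j, i ≠ j → 0 ≤ M i j) {x : ι → R}
    (hx : 0 ≤ x) (hMx : M *ᵥ x ≤ 0) {a b : ι} (ha : x a = 0) (hab : 0 < M a b) : x b = 0 := by
  have hterm : ∀ k ∈ Finset.univ, 0 ≤ M a k * x k := fun k _ => by
    rcases eq_or_ne a k with rfl | hak
    · rw [ha, mul_zero]
    · exact mul_nonneg (hoff a k hak) (hx k)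
  have hb : M a b * x b ≤ 0 :=
    (Finset.single_le_sum hterm (Finset.mem_univ b)).trans (hMx a)
  exact le_antisymm (nonpos_of_mul_nonpos_right hb hab) (hx b)

end OrderedRing

lemma dotProduct_mulVec_neg_of_posDef_neg {ι : Type*} [Fintype ι] {M : Matrix ι ι ℤ}
    (hM : (-(M.map (Int.cast : ℤ → ℝ))).PosDef) {y : ι → ℤ} (hy : y ≠ 0) : y ⬝ᵥ M *ᵥ y < 0 := by
  have hy_cast : ((↑) ∘ y : ι → ℝ) ≠ 0 := fun h => hy (funext fun i => by
    simpa using congrFun h i)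
  have hpos := hM.dotProduct_mulVec_pos hy_cast
  rw [star_trivial, neg_mulVec, dotProduct_neg, neg_pos] at hpos
  have hform : ((y ⬝ᵥ M *ᵥ y : ℤ) : ℝ) = ((↑) ∘ y) ⬝ᵥ M.map (Int.cast : ℤ → ℝ) *ᵥ ((↑) ∘ y) := by
    rw [← eq_intCast (Int.castRingHom ℝ), RingHom.map_dotProduct]
    congr 1
    ext i
    exact RingHom.map_mulVec _ M y i
  exact_mod_cast hform ▸ hpos

end Matrix

theorem lipman_cone_pos {n : ℕ} (M : Matrix (Fin n) (Fin n) ℤ)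
    (hsymm : M.IsSymm)
    (hnegdef : (-(M.map (Int.cast : ℤ → ℝ))).PosDef)
    (hoff : ∀ i j, i ≠ j → 0 ≤ M i j)
    (hconn : (SimpleGraph.fromRel (fun i j => 0 < M i j)).Connected)
    (x : Fin n → ℤ) (hx0 : x ≠ 0) (hx : ∀ i, M.mulVec x i ≤ 0) :
    ∀ i, 0 < x i := by
  have hx_nonneg : 0 ≤ x :=
    nonneg_of_mulVec_nonpos hoff (fun _ => dotProduct_mulVec_neg_of_posDef_neg hnegdef) hx
  have hzero_closed : ∀ a b, (SimpleGraph.fromRel (fun i j => 0 < M i j)).Adj a b →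
      x a = 0 → x b = 0 := by
    rintro a b ⟨-, hab⟩ ha
    exact eq_zero_of_mulVec_nonpos_of_pos hoff hx_nonneg hx ha (hab.elim id (hsymm.apply a b ▸ ·))
  intro i
  refine (hx_nonneg i).lt_of_ne' fun hxi => hx0 (funext fun j => ?_)
  exact (hconn i j).imp_of_adj hzero_closed hxi
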